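/- Let n ≥ 0 be an integer and a, q nonzero complex numbers such that q^{2k} ≠ 1 for 1 ≤ k ≤ n and a^2 q^{2k} ≠ 1 for every integer k with −1 ≤ k ≤ 2n−1 (equivalently {k; a} ≠ 0 for those k). Then Σ_{i=0}^{n} (−1)^i (a^{2i} q^{2i(i−1)} / ({i}! {n−i}!)) · ({2i−1; a}/{n+i−1; a}_{n+1}) = (−1)^n a^{n} q^{n(n−1)/2} / {n}!. (This says the full-twist coefficient t_{n,p} at p = 1 equals t_n = a^n q^{n(n−1)/2}/{n}!.) -/

import Mathlib

open Finset

/-- The balanced q-bracket `{n} = q^n - q^(-n)`. -/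
noncomputable def qbr (q : ℂ) (n : ℤ) : ℂ := q ^ n - q ^ (-n)

/-- The two-variable bracket `{n; a} = a q^n - a⁻¹ q^(-n)`. -/
noncomputable def qbrA (a q : ℂ) (n : ℤ) : ℂ := a * q ^ n - a⁻¹ * q ^ (-n)

/-- Descending product `{n}_i = {n}{n-1}⋯{n-i+1}` (equal to 1 when `i = 0`). -/
noncomputable def qbrP (q : ℂ) (n : ℤ) (i : ℕ) : ℂ := ∏ k ∈ Finset.range i, qbr q (n - k)

/-- Descending product `{n; a}_i = {n; a}{n-1; a}⋯{n-i+1; a}` (equal to 1 when `i = 0`). -/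
noncomputable def qbrAP (a q : ℂ) (n : ℤ) (i : ℕ) : ℂ := ∏ k ∈ Finset.range i, qbrA a q (n - k)

/-- Ascending product `{n; a}{n+1; a}⋯{n+i-1; a}` (used for `{-n; a}_i`, equal to 1 when `i = 0`). -/
noncomputable def qbrAPasc (a q : ℂ) (n : ℤ) (i : ℕ) : ℂ := ∏ k ∈ Finset.range i, qbrA a q (n + k)

/-- The factorial `{n}! = {n}_n`. -/
noncomputable def qfac (q : ℂ) (n : ℕ) : ℂ := qbrP q n n

/-- The balanced q-binomial coefficient `[n choose i] = {n}!/({i}!{n-i}!)`. -/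
noncomputable def qbinom (q : ℂ) (n i : ℕ) : ℂ := qfac q n / (qfac q i * qfac q (n - i))

/-!
Let `T n i` be `{n}!` times the `i`-th summand. There is a WZ certificate `G` with
`T (n+1) i + a q^n T n i = G (i+1) - G i` and `G 0 = G (n+2) = 0`, so the normalized sums satisfy
`S (n+1) = -a q^n S n` with `S 0 = 1`, whence `S n = (-1)^n a^n q^(n(n-1)/2)`. After the common
factor of its four terms is pulled out, the pointwise identity is a contiguous relation between
brackets, i.e. a Laurent polynomial identity in `a`, `q`, `q^N` and `q^I`.
-/

section Brackets

variable {a q : ℂ}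

lemma qbr_zero (q : ℂ) : qbr q 0 = 0 := by simp [qbr]

lemma qbr_natCast_ne_zero (hq : q ≠ 0) {k : ℕ} (h : q ^ (2 * k) ≠ 1) : qbr q k ≠ 0 := by
  refine fun h0 => h ?_
  rw [qbr, sub_eq_zero] at h0
  calc q ^ (2 * k) = q ^ (k : ℤ) * q ^ (k : ℤ) := by rw [← zpow_add₀ hq]; norm_cast; ring_nf
    _ = q ^ (k : ℤ) * q ^ (-k : ℤ) := congrArg _ h0
    _ = 1 := by rw [← zpow_add₀ hq, add_neg_cancel, zpow_zero]

lemma qbrA_ne_zero (ha : a ≠ 0) (hq : q ≠ 0) {k : ℤ} (h : a ^ 2 * q ^ (2 * k) ≠ 1) :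
    qbrA a q k ≠ 0 := by
  refine fun h0 => h ?_
  rw [qbrA, sub_eq_zero] at h0
  calc a ^ 2 * q ^ (2 * k) = (a * q ^ k) * (a * q ^ k) := by rw [two_mul, zpow_add₀ hq]; ring
    _ = (a * q ^ k) * (a⁻¹ * q ^ (-k)) := congrArg _ h0
    _ = 1 := by rw [zpow_neg]; field_simp

end Brackets

section Products

variable {q : ℂ}

lemma qbrP_succ (q : ℂ) (m : ℤ) (i : ℕ) : qbrP q m (i + 1) = qbrP q m i * qbr q (m - i) :=
  prod_range_succ _ _

lemma qbrP_succ' (q : ℂ) (m : ℤ) (i : ℕ) :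
    qbrP q m (i + 1) = qbr q m * qbrP q (m - 1) i := by
  simp only [qbrP, prod_range_succ', Nat.cast_add, Nat.cast_one, Nat.cast_zero, sub_zero,
    sub_add_eq_sub_sub_swap, mul_comm]

lemma qbrAP_succ (a q : ℂ) (m : ℤ) (i : ℕ) :
    qbrAP a q m (i + 1) = qbrAP a q m i * qbrA a q (m - i) :=
  prod_range_succ _ _

lemma qbrAP_succ' (a q : ℂ) (m : ℤ) (i : ℕ) :
    qbrAP a q m (i + 1) = qbrA a q m * qbrAP a q (m - 1) i := by
  simp only [qbrAP, prod_range_succ', Nat.cast_add, Nat.cast_one, Nat.cast_zero, sub_zero,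
    sub_add_eq_sub_sub_swap, mul_comm]

lemma qfac_succ (q : ℂ) (i : ℕ) : qfac q (i + 1) = qbr q (i + 1) * qfac q i := by
  rw [qfac, qfac, Nat.cast_succ, qbrP_succ', add_sub_cancel_right]

lemma qbrP_natCast_eq_zero (q : ℂ) {m i : ℕ} (h : m < i) : qbrP q m i = 0 :=
  prod_eq_zero (mem_range.mpr h) (by rw [sub_self, qbr_zero])

lemma qbrP_add (q : ℂ) (m : ℤ) (i j : ℕ) :
    qbrP q m (i + j) = qbrP q m i * qbrP q (m - i) j := by
  simp only [qbrP, prod_range_add, Nat.cast_add, sub_add_eq_sub_sub]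

lemma qfac_eq_qbrP_mul_qfac (q : ℂ) {n i : ℕ} (hi : i ≤ n) :
    qfac q n = qbrP q n i * qfac q (n - i) := by
  obtain ⟨j, rfl⟩ := Nat.exists_eq_add_of_le hi
  rw [qfac, qfac, Nat.add_sub_cancel_left, qbrP_add, Nat.cast_add, add_sub_cancel_left]

lemma qbrP_ne_zero {m : ℤ} {i : ℕ} (h : ∀ k : ℤ, m - i < k → k ≤ m → qbr q k ≠ 0) :
    qbrP q m i ≠ 0 :=
  prod_ne_zero_iff.mpr fun j hj => h _ (by have := mem_range.mp hj; omega) (by omega)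

lemma qfac_ne_zero {i : ℕ} (h : ∀ k : ℤ, 1 ≤ k → k ≤ i → qbr q k ≠ 0) :
    qfac q i ≠ 0 :=
  qbrP_ne_zero fun k h1 h2 => h k (by omega) h2

end Products

lemma qbr_qbrA_contiguous {a q : ℂ} (ha : a ≠ 0) (hq : q ≠ 0) (N I : ℤ) :
    qbr q (N + 1) * qbrA a q (2 * I - 1)
      + a * q ^ N * (qbr q (N + 1 - I) * qbrA a q (2 * I - 1) * qbrA a q (N + I))
    = a ^ 2 * q ^ (2 * N + 2 * I) * (qbr q (N + 1 - I) * qbrA a q (I - 1))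
      + q ^ (2 * N - 2 * I + 2) * (qbr q I * qbrA a q (N + I)) := by
  have hx : q ^ I ≠ 0 := zpow_ne_zero _ hq
  have hy : q ^ N ≠ 0 := zpow_ne_zero _ hq
  simp only [qbr, qbrA, zpow_neg, zpow_add₀ hq, zpow_sub₀ hq, zpow_mul', zpow_ofNat]
  field_simp
  ring

-- `{n}!` times the `i`-th summand, using `{n}! / {n-i}! = {n}_i`.
noncomputable def twistTerm (a q : ℂ) (n i : ℕ) : ℂ :=
  (-1) ^ i * a ^ (2 * i) * q ^ (2 * (i : ℤ) * (i - 1)) * qbrP q n i / qfac q i *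
    (qbrA a q (2 * i - 1) / qbrAP a q (n + i - 1) (n + 1))

-- The certificate `G`, for fixed `n`.
noncomputable def twistCert (a q : ℂ) (n i : ℕ) : ℂ :=
  (-1) ^ (i + 1) * a ^ (2 * i) * q ^ (2 * ((i : ℤ) - 1) ^ 2 + 2 * n) *
    (qbr q i * qbrP q (n + 1) i) / (qbr q (n + 1) * qfac q i * qbrAP a q (n + i - 1) (n + 1))

noncomputable def twistFactor (a q : ℂ) (n i : ℕ) : ℂ :=
  (-1) ^ i * a ^ (2 * i) * q ^ (2 * (i : ℤ) * (i - 1)) * qbrP q (n + 1) i /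
    (qbr q (n + 1) * qfac q i * qbrAP a q (n + i) (n + 2))

section Telescoping

variable {a q : ℂ} {n i : ℕ}

lemma twistTerm_succ_eq (hB : qbr q (n + 1) ≠ 0) :
    twistTerm a q (n + 1) i = twistFactor a q n i * (qbr q (n + 1) * qbrA a q (2 * i - 1)) := by
  rw [twistTerm, twistFactor, Nat.cast_succ, show (n : ℤ) + 1 + i - 1 = n + i by ring]
  field_simp

lemma twistTerm_eq (hB : qbr q (n + 1) ≠ 0) (hA : qbrA a q (n + i) ≠ 0) :
    a * q ^ (n : ℤ) * twistTerm a q n i = twistFactor a q n i *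
      (a * q ^ (n : ℤ) * (qbr q (n + 1 - i) * qbrA a q (2 * i - 1) * qbrA a q (n + i))) := by
  have hP : qbrP q n i = qbrP q (n + 1) i * qbr q (n + 1 - i) / qbr q (n + 1) := by
    rw [eq_div_iff hB, ← qbrP_succ, qbrP_succ', add_sub_cancel_right, mul_comm]
  rw [twistTerm, twistFactor, hP, qbrAP_succ' a q (n + i)]
  field_simp

lemma twistCert_eq (hq : q ≠ 0) (hA : qbrA a q (n + i) ≠ 0) :
    twistCert a q n i =
      twistFactor a q n i * -(q ^ (2 * (n : ℤ) - 2 * i + 2) * (qbr q i * qbrA a q (n + i))) := by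
  rw [twistCert, twistFactor, qbrAP_succ' a q (n + i),
    show 2 * ((i : ℤ) - 1) ^ 2 + 2 * n = 2 * i * (i - 1) + (2 * n - 2 * i + 2) by ring,
    zpow_add₀ hq, pow_succ]
  field_simp

lemma twistCert_succ_eq (hq : q ≠ 0) (hi : i ≤ n + 1)
    (hbr : ∀ k : ℤ, 1 ≤ k → k ≤ n + 1 → qbr q k ≠ 0) (hA : qbrA a q (i - 1) ≠ 0) :
    twistCert a q n (i + 1) = twistFactor a q n i *
      (a ^ 2 * q ^ (2 * (n : ℤ) + 2 * i) * (qbr q (n + 1 - i) * qbrA a q (i - 1))) := by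
  rcases hi.lt_or_eq with hi | rfl
  · have hB : qbr q (i + 1) ≠ 0 := hbr _ (by omega) (by omega)
    have hD : qbrAP a q (n + i) (n + 2) = qbrAP a q (n + i) (n + 1) * qbrA a q (i - 1) := by
      rw [qbrAP_succ]; congr 2; push_cast; ring
    rw [twistCert, twistFactor, qbrP_succ, qfac_succ, hD, Nat.cast_succ,
      show (n : ℤ) + (i + 1) - 1 = n + i by ring,
      show 2 * ((i : ℤ) + 1 - 1) ^ 2 + 2 * n = 2 * i * (i - 1) + (2 * n + 2 * i) by ring,
      zpow_add₀ hq, pow_succ]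
    field_simp
    ring
  -- at `i = n + 1` both sides vanish, whether or not `{n + 2} = 0`
  · have hP : qbrP q (n + 1) (n + 1 + 1) = 0 := by
      exact_mod_cast qbrP_natCast_eq_zero q (m := n + 1) (by omega)
    simp [twistCert, hP, qbr_zero]

lemma twistTerm_succ_add_eq (ha : a ≠ 0) (hq : q ≠ 0) (hi : i ≤ n + 1)
    (hbr : ∀ k : ℤ, 1 ≤ k → k ≤ n + 1 → qbr q k ≠ 0)
    (hbA : ∀ k : ℤ, -1 ≤ k → k ≤ 2 * n + 1 → qbrA a q k ≠ 0) :
    twistTerm a q (n + 1) i + a * q ^ (n : ℤ) * twistTerm a q n i =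
      twistCert a q n (i + 1) - twistCert a q n i := by
  have hB := hbr (n + 1) (by omega) le_rfl
  have hA := hbA (n + i) (by omega) (by omega)
  rw [twistTerm_succ_eq hB, twistTerm_eq hB hA, twistCert_eq hq hA,
    twistCert_succ_eq hq hi hbr (hbA _ (by omega) (by omega))]
  linear_combination twistFactor a q n i * qbr_qbrA_contiguous ha hq n i

lemma sum_twistTerm_succ (ha : a ≠ 0) (hq : q ≠ 0)
    (hbr : ∀ k : ℤ, 1 ≤ k → k ≤ n + 1 → qbr q k ≠ 0)
    (hbA : ∀ k : ℤ, -1 ≤ k → k ≤ 2 * n + 1 → qbrA a q k ≠ 0) :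
    ∑ i ∈ range (n + 2), twistTerm a q (n + 1) i =
      -(a * q ^ (n : ℤ)) * ∑ i ∈ range (n + 1), twistTerm a q n i := by
  have hlast : twistTerm a q n (n + 1) = 0 := by
    simp [twistTerm, qbrP_natCast_eq_zero q (Nat.lt_succ_self n)]
  have hcert_zero : twistCert a q n 0 = 0 := by simp [twistCert, qbr_zero]
  have hcert_top : twistCert a q n (n + 2) = 0 := by
    have hP : qbrP q (n + 1) (n + 2) = 0 := by
      exact_mod_cast qbrP_natCast_eq_zero q (m := n + 1) (by omega)
    simp [twistCert, hP]
  have htel : ∑ i ∈ range (n + 2),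
      (twistTerm a q (n + 1) i + a * q ^ (n : ℤ) * twistTerm a q n i) = 0 := by
    rw [sum_congr rfl fun i hi =>
        twistTerm_succ_add_eq ha hq (Nat.lt_succ_iff.mp (mem_range.mp hi)) hbr hbA,
      sum_range_sub, hcert_top, hcert_zero, sub_zero]
  rw [sum_add_distrib, ← mul_sum, sum_range_succ (twistTerm a q n) (n + 1), hlast,
    add_zero] at htel
  linear_combination htel

lemma sum_twistTerm (ha : a ≠ 0) (hq : q ≠ 0)
    (hbr : ∀ k : ℤ, 1 ≤ k → k ≤ n → qbr q k ≠ 0)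
    (hbA : ∀ k : ℤ, -1 ≤ k → k ≤ 2 * n - 1 → qbrA a q k ≠ 0) :
    ∑ i ∈ range (n + 1), twistTerm a q n i = (-1) ^ n * a ^ n * q ^ (n * (n - 1) / 2) := by
  rw [← sum_range_id]
  induction n with
  | zero => simp [twistTerm, qfac, qbrP, qbrAP, hbA (-1) le_rfl (by simp)]
  | succ n ih =>
    rw [sum_twistTerm_succ ha hq (by exact_mod_cast hbr) (fun k h1 h2 => hbA k h1 (by omega)),
      ih (fun k h1 h2 => hbr k h1 (by omega)) (fun k h1 h2 => hbA k h1 (by omega)),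
      sum_range_succ, pow_add, zpow_natCast]
    ring

end Telescoping

lemma pow_two_mul_mul_sub_one (q : ℂ) (i : ℕ) :
    q ^ (2 * i * (i - 1)) = q ^ (2 * (i : ℤ) * (i - 1)) := by
  rcases i with _ | i
  · simp
  · rw [← zpow_natCast]; push_cast; ring_nf

lemma summand_eq_twistTerm_div {a q : ℂ} {n i : ℕ} (hn : qfac q n ≠ 0) (hi : i ≤ n) :
    (-1 : ℂ) ^ i * (a ^ (2 * i) * q ^ (2 * i * (i - 1)) / (qfac q i * qfac q (n - i))) *
      (qbrA a q (2 * (i : ℤ) - 1) / qbrAP a q ((n : ℤ) + (i : ℤ) - 1) (n + 1)) =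
      twistTerm a q n i / qfac q n := by
  rw [qfac_eq_qbrP_mul_qfac q hi] at hn ⊢
  obtain ⟨hP, hF⟩ := mul_ne_zero_iff.mp hn
  rw [twistTerm, pow_two_mul_mul_sub_one]
  field_simp

theorem statement_13 (a q : ℂ) (ha : a ≠ 0) (hq : q ≠ 0) (n : ℕ)
    (hroot : ∀ k : ℕ, 1 ≤ k → k ≤ n → q ^ (2 * k) ≠ 1)
    (hA : ∀ k : ℤ, -1 ≤ k → k ≤ 2 * (n : ℤ) - 1 → a ^ 2 * q ^ (2 * k) ≠ 1) :
    ∑ i ∈ Finset.range (n + 1),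
        (-1 : ℂ) ^ i * (a ^ (2 * i) * q ^ (2 * i * (i - 1)) / (qfac q i * qfac q (n - i))) *
          (qbrA a q (2 * (i : ℤ) - 1) / qbrAP a q ((n : ℤ) + (i : ℤ) - 1) (n + 1)) =
      (-1 : ℂ) ^ n * a ^ n * q ^ (n * (n - 1) / 2) / qfac q n := by
  have hbr : ∀ k : ℤ, 1 ≤ k → k ≤ n → qbr q k ≠ 0 := fun k h1 h2 => by
    lift k to ℕ using (by omega)
    exact qbr_natCast_ne_zero hq (hroot k (by exact_mod_cast h1) (by exact_mod_cast h2))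
  have hbA : ∀ k : ℤ, -1 ≤ k → k ≤ 2 * n - 1 → qbrA a q k ≠ 0 := fun k h1 h2 =>
    qbrA_ne_zero ha hq (hA k h1 h2)
  rw [sum_congr rfl fun i hi => summand_eq_twistTerm_div (qfac_ne_zero hbr)
    (Nat.lt_succ_iff.mp (mem_range.mp hi)), ← sum_div, sum_twistTerm ha hq hbr hbA]
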